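/- If μ̄ is a finite measure (μ̄(𝒥) < ∞) and X is a Banach space, then (HK(X, μ̄), ‖·‖_𝔜) is complete: every sequence (ξ_n) in HK(X, μ̄) that is Cauchy with respect to ‖·‖_𝔜 converges in the norm ‖·‖_𝔜 to some ξ ∈ HK(X, μ̄), and moreover ∫_𝒥 ξ_n dμ̄ → ∫_𝒥 ξ dμ̄ in X. -/

import Mathlib

open MeasureTheory Filter Topology
open scoped ENNReal NNReal

/-- A tagged sub-partition of `J`: finitely many pairwise disjoint measurable sets of
finite measure, each with a tag belonging to it. -/
structure TaggedSubPartition (J : Type*) [MeasurableSpace J] (μ : MeasureTheory.Measure J) where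
  n : ℕ
  piece : Fin n → Set J
  tag : Fin n → J
  measurable : ∀ i, MeasurableSet (piece i)
  finite : ∀ i, μ (piece i) < ⊤
  disjoint : ∀ i j, i ≠ j → Disjoint (piece i) (piece j)
  tag_mem : ∀ i, tag i ∈ piece i

/-- `D'.Refines D` (written `D' ≫ D` in the paper) : every set of `D'` is contained
in some set of `D`. -/
def TaggedSubPartition.Refines {J : Type*} [MeasurableSpace J]
    {μ : MeasureTheory.Measure J} (D' D : TaggedSubPartition J μ) : Prop :=
  ∀ i, ∃ j, D'.piece i ⊆ D.piece j

/-- The Riemann sum `S(ξ, D̂) = Σ ξ(d_i) μ̄(D_i)`. -/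
noncomputable def riemannSum {J : Type*} [MeasurableSpace J] {X : Type*}
    [NormedAddCommGroup X] [NormedSpace ℝ X] (μ : MeasureTheory.Measure J)
    (ξ : J → X) (D : TaggedSubPartition J μ) : X :=
  ∑ i : Fin D.n, (μ (D.piece i)).toReal • ξ (D.tag i)

/-- `ξ` is Henstock–Kurzweil integrable with integral `I`: `I` is the limit of the net
of Riemann sums over the directed set of tagged sub-partitions ordered by refinement. -/
def HKIntegralTo {J : Type*} [MeasurableSpace J] {X : Type*}
    [NormedAddCommGroup X] [NormedSpace ℝ X] (μ : MeasureTheory.Measure J)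
    (ξ : J → X) (I : X) : Prop :=
  ∀ ε : ℝ, 0 < ε → ∃ D₀ : TaggedSubPartition J μ, ∀ D : TaggedSubPartition J μ,
    D.Refines D₀ → ‖riemannSum μ ξ D - I‖ ≤ ε

/-- `ξ ∈ HK(X, μ̄)`. -/
def HKIntegrable {J : Type*} [MeasurableSpace J] {X : Type*}
    [NormedAddCommGroup X] [NormedSpace ℝ X] (μ : MeasureTheory.Measure J)
    (ξ : J → X) : Prop :=
  ∃ I : X, HKIntegralTo μ ξ I

open Classical in
/-- The HK integral `∫_𝒥 ξ dμ̄` (an arbitrarily chosen integral value, `0` if none exists). -/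
noncomputable def HKintegral {J : Type*} [MeasurableSpace J] {X : Type*}
    [NormedAddCommGroup X] [NormedSpace ℝ X] (μ : MeasureTheory.Measure J)
    (ξ : J → X) : X :=
  if h : HKIntegrable μ ξ then h.choose else 0

/-- `‖ξ‖_𝔜 = sup {‖S(ξ, D̂)‖ : D̂ ∈ 𝔜}`, as an extended nonnegative real. -/
noncomputable def HKnormE {J : Type*} [MeasurableSpace J] {X : Type*}
    [NormedAddCommGroup X] [NormedSpace ℝ X] (μ : MeasureTheory.Measure J)
    (ξ : J → X) : ℝ≥0∞ :=
  ⨆ D : TaggedSubPartition J μ, (‖riemannSum μ ξ D‖₊ : ℝ≥0∞)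

/-- `‖ξ‖_𝔜` as a real number. -/
noncomputable def HKnorm {J : Type*} [MeasurableSpace J] {X : Type*}
    [NormedAddCommGroup X] [NormedSpace ℝ X] (μ : MeasureTheory.Measure J)
    (ξ : J → X) : ℝ :=
  (HKnormE μ ξ).toReal

/-!
The Riemann sum over the one-piece sub-partition `{(P, t)}` is `μ(P) • ξ(t)`, so a
`‖·‖_𝔜`-Cauchy sequence `ξₙ` converges at every tag of a piece of positive measure, and its
Riemann sums converge, uniformly over all sub-partitions, to those of the pointwise limit `f`.
HK integrability is convergence of the Riemann sums along the refinement filter, and uniform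
limits commute with limits (Moore–Osgood): the integrals of the `ξₙ` form a Cauchy sequence and
their limit is the HK integral of `f`.
-/

open Set

theorem UniformCauchySeqOnFilter.cauchy_map_of_tendsto {ι α β : Type*} [UniformSpace β]
    {F : ι → α → β} {p : Filter ι} {p' : Filter α} [NeBot p] [NeBot p'] {L : ι → β}
    (hF : UniformCauchySeqOnFilter F p p') (hL : ∀ i, Tendsto (F i) p' (𝓝 (L i))) :
    Cauchy (map L p) := by
  refine cauchy_map_iff.2 ⟨‹_›, fun s hs => ?_⟩
  obtain ⟨t, ht, hts⟩ := comp3_mem_uniformity hs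
  refine mem_map.2 ((hF t ht).curry.mono fun q hq => ?_)
  have h₁ : ∀ᶠ x in p', (L q.1, F q.1 x) ∈ t := Uniform.tendsto_nhds_right.1 (hL q.1) ht
  have h₃ : ∀ᶠ x in p', (F q.2 x, L q.2) ∈ t := Uniform.tendsto_nhds_left.1 (hL q.2) ht
  obtain ⟨x, h₁, h₂, h₃⟩ := (h₁.and (hq.and h₃)).exists
  exact hts ⟨F q.1 x, h₁, F q.2 x, h₂, h₃⟩

theorem tendsto_smul_limUnder_of_cauchySeq_smul {ι 𝕜 X : Type*} [Nonempty ι] [SemilatticeSup ι]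
    [NormedField 𝕜] [NormedAddCommGroup X] [NormedSpace 𝕜 X] [CompleteSpace X] {u : ι → X} {c : 𝕜}
    (h : CauchySeq fun n => c • u n) :
    Tendsto (fun n => c • u n) atTop (𝓝 (c • limUnder atTop u)) := by
  rcases eq_or_ne c 0 with rfl | hc
  · simp only [zero_smul]
    exact tendsto_const_nhds
  obtain ⟨y, hy⟩ := cauchySeq_tendsto_of_complete h
  have hu : Tendsto u atTop (𝓝 (c⁻¹ • y)) := by
    simpa [smul_smul, inv_mul_cancel₀ hc] using hy.const_smul c⁻¹
  rw [hu.limUnder_eq]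
  exact hu.const_smul c

namespace TaggedSubPartition

variable {J : Type*} [MeasurableSpace J] {μ : Measure J}

def empty (μ : Measure J) : TaggedSubPartition J μ :=
  ⟨0, Fin.elim0, Fin.elim0, Fin.rec0, Fin.rec0, Fin.rec0, Fin.rec0⟩

def single {s : Set J} (hs : MeasurableSet s) (hμs : μ s < ⊤) {j : J} (hj : j ∈ s) :
    TaggedSubPartition J μ :=
  ⟨1, fun _ => s, fun _ => j, fun _ => hs, fun _ => hμs,
    fun i k hik => absurd (Subsingleton.elim i k) hik, fun _ => hj⟩

theorem Refines.refl (D : TaggedSubPartition J μ) : D.Refines D :=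
  fun i => ⟨i, subset_rfl⟩

theorem Refines.trans {D₁ D₂ D₃ : TaggedSubPartition J μ} (h₁₂ : D₁.Refines D₂)
    (h₂₃ : D₂.Refines D₃) : D₁.Refines D₃ := fun i =>
  let ⟨j, hj⟩ := h₁₂ i
  let ⟨k, hk⟩ := h₂₃ j
  ⟨k, hj.trans hk⟩

theorem exists_refines_refines (D₁ D₂ : TaggedSubPartition J μ) :
    ∃ D : TaggedSubPartition J μ, D.Refines D₁ ∧ D.Refines D₂ := by
  classical
  -- the nonempty intersections of a piece of `D₁` with a piece of `D₂`, tagged arbitrarily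
  let T := {p : Fin D₁.n × Fin D₂.n // (D₁.piece p.1 ∩ D₂.piece p.2).Nonempty}
  let e : Fin (Fintype.card T) ≃ T := (Fintype.equivFin T).symm
  refine ⟨⟨Fintype.card T, fun i => D₁.piece (e i).1.1 ∩ D₂.piece (e i).1.2,
    fun i => (e i).2.choose, fun i => (D₁.measurable _).inter (D₂.measurable _),
    fun i => (measure_mono inter_subset_left).trans_lt (D₁.finite _), fun i j hij => ?_,
    fun i => (e i).2.choose_spec⟩,
    fun i => ⟨(e i).1.1, inter_subset_left⟩, fun i => ⟨(e i).1.2, inter_subset_right⟩⟩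
  have hne : (e i).1 ≠ (e j).1 := fun h => hij (e.injective (Subtype.ext h))
  by_cases h₁ : (e i).1.1 = (e j).1.1
  · have h₂ : (e i).1.2 ≠ (e j).1.2 := fun h₂ => hne (Prod.ext h₁ h₂)
    exact (D₂.disjoint _ _ h₂).mono inter_subset_right inter_subset_right
  · exact (D₁.disjoint _ _ h₁).mono inter_subset_left inter_subset_left

/-- The filter of the net `(𝔜, ≫)`: its basic sets are the refinements of a fixed
sub-partition. -/
def refinementFilter (μ : Measure J) : Filter (TaggedSubPartition J μ) :=
  ⨅ D₀, 𝓟 {D | D.Refines D₀}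

theorem hasBasis_refinementFilter :
    (refinementFilter μ).HasBasis (fun _ => True) fun D₀ => {D | D.Refines D₀} := by
  have : Nonempty (TaggedSubPartition J μ) := ⟨empty μ⟩
  refine hasBasis_iInf_principal fun D₁ D₂ => ?_
  obtain ⟨D, h₁, h₂⟩ := exists_refines_refines D₁ D₂
  exact ⟨D, fun D' h => h.trans h₁, fun D' h => h.trans h₂⟩

instance : NeBot (refinementFilter μ) :=
  hasBasis_refinementFilter.neBot_iff.2 fun {D₀} _ => ⟨D₀, Refines.refl D₀⟩

end TaggedSubPartition

open TaggedSubPartition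

section

variable {J : Type*} [MeasurableSpace J] {μ : Measure J} {X : Type*} [NormedAddCommGroup X]
  [NormedSpace ℝ X]

theorem riemannSum_sub (f g : J → X) (D : TaggedSubPartition J μ) :
    riemannSum μ (f - g) D = riemannSum μ f D - riemannSum μ g D := by
  simp [riemannSum, smul_sub, Finset.sum_sub_distrib]

theorem riemannSum_single (f : J → X) {s : Set J} (hs : MeasurableSet s) (hμs : μ s < ⊤)
    {j : J} (hj : j ∈ s) : riemannSum μ f (single hs hμs hj) = (μ s).toReal • f j := by
  simp only [riemannSum, single]
  exact Fin.sum_univ_one _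

theorem enorm_riemannSum_le_HKnormE (f : J → X) (D : TaggedSubPartition J μ) :
    ‖riemannSum μ f D‖ₑ ≤ HKnormE μ f :=
  le_iSup (fun D => (‖riemannSum μ f D‖₊ : ℝ≥0∞)) D

theorem hkIntegralTo_iff_tendsto {f : J → X} {I : X} :
    HKIntegralTo μ f I ↔ Tendsto (riemannSum μ f) (refinementFilter μ) (𝓝 I) := by
  rw [hasBasis_refinementFilter.tendsto_iff Metric.nhds_basis_closedBall]
  simp [HKIntegralTo, dist_eq_norm]

theorem HKIntegralTo.HKintegral_eq {f : J → X} {I : X} (h : HKIntegralTo μ f I) :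
    HKintegral μ f = I := by
  have hf : HKIntegrable μ f := ⟨I, h⟩
  rw [HKintegral, dif_pos hf]
  exact tendsto_nhds_unique (hkIntegralTo_iff_tendsto.1 hf.choose_spec)
    (hkIntegralTo_iff_tendsto.1 h)

theorem uniformCauchySeqOn_riemannSum {ξ : ℕ → J → X}
    (h : ∀ ε : ℝ, 0 < ε → ∃ N : ℕ, ∀ m n : ℕ, N ≤ m → N ≤ n →
      HKnormE μ (ξ m - ξ n) ≤ ENNReal.ofReal ε) :
    UniformCauchySeqOn (fun n => riemannSum μ (ξ n)) atTop univ := by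
  refine Metric.uniformCauchySeqOn_iff.2 fun ε hε => ?_
  obtain ⟨N, hN⟩ := h (ε / 2) (half_pos hε)
  refine ⟨N, fun m hm n hn D _ => ?_⟩
  have := (enorm_riemannSum_le_HKnormE _ D).trans (hN m n hm hn)
  rw [riemannSum_sub, ← ofReal_norm, ENNReal.ofReal_le_ofReal_iff (half_pos hε).le] at this
  rw [dist_eq_norm]
  linarith

theorem tendsto_HKnormE_sub_of_tendstoUniformly {ι : Type*} {p : Filter ι} {ξ : ι → J → X}
    {f : J → X} (h : TendstoUniformly (fun i => riemannSum μ (ξ i)) (riemannSum μ f) p) :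
    Tendsto (fun i => HKnormE μ (ξ i - f)) p (𝓝 0) := by
  refine ENNReal.tendsto_nhds_zero.2 fun ε hε => ?_
  filter_upwards [EMetric.tendstoUniformly_iff.1 h ε hε] with i hi
  refine iSup_le fun D => ?_
  rw [← enorm_eq_nnnorm, riemannSum_sub, ← edist_eq_enorm_sub, edist_comm]
  exact (hi D).le

theorem tendsto_riemannSum_limUnder [CompleteSpace X] {ξ : ℕ → J → X}
    (h : UniformCauchySeqOn (fun n => riemannSum μ (ξ n)) atTop univ)
    (D : TaggedSubPartition J μ) :
    Tendsto (fun n => riemannSum μ (ξ n) D) atTop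
      (𝓝 (riemannSum μ (fun j => limUnder atTop fun n => ξ n j) D)) :=
  tendsto_finsetSum _ fun i _ => tendsto_smul_limUnder_of_cauchySeq_smul <| by
    simpa only [riemannSum_single] using
      h.cauchySeq (mem_univ (single (D.measurable i) (D.finite i) (D.tag_mem i)))

end

theorem HK_complete_general {J : Type*} [MeasurableSpace J] {X : Type*}
    [NormedAddCommGroup X] [NormedSpace ℝ X] [CompleteSpace X]
    (μ : MeasureTheory.Measure J)
    (ξ : ℕ → J → X) (hint : ∀ n, HKIntegrable μ (ξ n))
    (hcauchy : ∀ ε : ℝ, 0 < ε → ∃ N : ℕ, ∀ m n : ℕ, N ≤ m → N ≤ n →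
      HKnormE μ (ξ m - ξ n) ≤ ENNReal.ofReal ε) :
    ∃ f : J → X, HKIntegrable μ f ∧
      Filter.Tendsto (fun n => HKnormE μ (ξ n - f)) Filter.atTop (nhds 0) ∧
      Filter.Tendsto (fun n => HKintegral μ (ξ n)) Filter.atTop (nhds (HKintegral μ f)) := by
  let f : J → X := fun j => limUnder atTop fun n => ξ n j
  have hunifCauchy := uniformCauchySeqOn_riemannSum hcauchy
  have hunif : TendstoUniformly (fun n => riemannSum μ (ξ n)) (riemannSum μ f) atTop :=
    tendstoUniformlyOn_univ.1 <| hunifCauchy.tendstoUniformlyOn_of_tendsto fun D _ =>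
      tendsto_riemannSum_limUnder hunifCauchy D
  choose I hI using hint
  have hI' : ∀ n, Tendsto (riemannSum μ (ξ n)) (refinementFilter μ) (𝓝 (I n)) :=
    fun n => hkIntegralTo_iff_tendsto.1 (hI n)
  have hIcauchy : CauchySeq I :=
    (hunifCauchy.uniformCauchySeqOnFilter.mono_right
      (le_principal_iff.2 univ_mem)).cauchy_map_of_tendsto hI'
  obtain ⟨ℓ, hℓ⟩ := cauchySeq_tendsto_of_complete hIcauchy
  have hf : HKIntegralTo μ f ℓ := hkIntegralTo_iff_tendsto.2 <|
    hunif.tendsto_of_eventually_tendsto (Eventually.of_forall hI') hℓ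
  refine ⟨f, ⟨ℓ, hf⟩, tendsto_HKnormE_sub_of_tendstoUniformly hunif, ?_⟩
  simpa only [fun n => (hI n).HKintegral_eq, hf.HKintegral_eq] using hℓ

/-- if `μ̄` is a finite measure and `X` a Banach space, then
`(HK(X, μ̄), ‖·‖_𝔜)` is complete, and the HK integrals of the terms of a
`‖·‖_𝔜`-Cauchy sequence converge to the HK integral of the limit. -/
theorem HK_complete {J : Type*} [MeasurableSpace J] {X : Type*}
    [NormedAddCommGroup X] [NormedSpace ℝ X] [CompleteSpace X]
    (μ : MeasureTheory.Measure J) [MeasureTheory.IsFiniteMeasure μ] (hμ : μ.IsComplete)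
    (ξ : ℕ → J → X) (hint : ∀ n, HKIntegrable μ (ξ n))
    (hcauchy : ∀ ε : ℝ, 0 < ε → ∃ N : ℕ, ∀ m n : ℕ, N ≤ m → N ≤ n →
      HKnormE μ (ξ m - ξ n) ≤ ENNReal.ofReal ε) :
    ∃ f : J → X, HKIntegrable μ f ∧
      Filter.Tendsto (fun n => HKnormE μ (ξ n - f)) Filter.atTop (nhds 0) ∧
      Filter.Tendsto (fun n => HKintegral μ (ξ n)) Filter.atTop (nhds (HKintegral μ f)) :=
  HK_complete_general μ ξ hint hcauchy
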